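/- arXiv:1406.7131 — 4 statements merged into one kernel-verified Lean document; each statement's English description precedes it below -/
import Mathlib

section
/- Let $\mathcal{M}$ be a finite set of $d \times d$ real matrices with joint spectral radius $\rho(\mathcal{M}) > 1$, and let $y \in \mathbb{R}^d$ be a nonzero vector not contained in any proper linear subspace of $\mathbb{R}^d$ invariant under all matrices in $\mathcal{M}$. Then for every $L \in \mathbb{N}$ there exist $n \geq L$ and matrices $M_1, \dots, M_n \in \mathcal{M}$ such that $\|M_1 \cdots M_n y\| > \|y\|$ and $\|M_1 \cdots M_n y\| > \|M_{n-i} \cdots M_n y\|$ for all $i = 0, \dots, n-2$. -/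
noncomputable def mnorm {ι : Type*} [Fintype ι] (A : Matrix ι ι ℝ) : ℝ :=
  ⨆ i, ⨆ j, |A i j|

def prodOf {ι : Type*} [Fintype ι] [DecidableEq ι] (S : Set (Matrix ι ι ℝ)) (n : ℕ) :
    Set (Matrix ι ι ℝ) :=
  {P | ∃ l : List (Matrix ι ι ℝ), l.length = n ∧ (∀ A ∈ l, A ∈ S) ∧ l.prod = P}

noncomputable def jsr {ι : Type*} [Fintype ι] [DecidableEq ι]
    (S : Set (Matrix ι ι ℝ)) : ℝ :=
  Filter.limsup
    (fun n : ℕ => sSup ((fun P => mnorm P ^ (1 / (n:ℝ))) '' prodOf S n))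
    Filter.atTop

/-!
If the orbit `{P *ᵥ y | P ∈ ⟨S⟩}` of `y` under the monoid generated by `S` were bounded, its span
would be an `S`-invariant subspace containing `y`, hence everything; then all products of matrices
of `S` would be uniformly bounded and `jsr S ≤ 1`. So the orbit is unbounded, and a shortest
product pushing `y` beyond the bound `T` of all products of length `≤ L + 1` has the required
properties: it is longer than `L + 1`, and each of its proper suffixes, being shorter, keeps `y`
within `T`.
-/

open Filter Matrix

variable {ι : Type*} [Fintype ι]

lemma mnorm_nonneg (A : Matrix ι ι ℝ) : 0 ≤ mnorm A :=
  Real.iSup_nonneg fun _ => Real.iSup_nonneg fun _ => abs_nonneg _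

lemma exists_norm_mulVec_le_of_mem_span {F : Set (Matrix ι ι ℝ)} {O : Set (ι → ℝ)} {C : ℝ}
    (hC : ∀ P ∈ F, ∀ x ∈ O, ‖P *ᵥ x‖ ≤ C) {v : ι → ℝ} (hv : v ∈ Submodule.span ℝ O) :
    ∃ K, ∀ P ∈ F, ‖P *ᵥ v‖ ≤ K := by
  induction hv using Submodule.span_induction with
  | mem x hx => exact ⟨C, fun P hP => hC P hP x hx⟩
  | zero => exact ⟨0, fun P _ => by simp⟩
  | add x y _ _ hx hy =>
    obtain ⟨K₁, hK₁⟩ := hx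
    obtain ⟨K₂, hK₂⟩ := hy
    exact ⟨K₁ + K₂, fun P hP => by
      rw [mulVec_add]
      exact (norm_add_le _ _).trans (add_le_add (hK₁ P hP) (hK₂ P hP))⟩
  | smul a x _ hx =>
    obtain ⟨K, hK⟩ := hx
    exact ⟨‖a‖ * K, fun P hP => by
      rw [mulVec_smul, norm_smul]
      exact mul_le_mul_of_nonneg_left (hK P hP) (norm_nonneg a)⟩

lemma exists_norm_mulVec_le_of_finite {S : Set (Matrix ι ι ℝ)} (hS : S.Finite) :
    ∃ b, 1 ≤ b ∧ ∀ A ∈ S, ∀ v, ‖A *ᵥ v‖ ≤ b * ‖v‖ := by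
  obtain ⟨c, hc⟩ := (hS.image fun A => ‖LinearMap.toContinuousLinearMap (mulVecLin A)‖).bddAbove
  refine ⟨max c 1, le_max_right _ _, fun A hA v => ?_⟩
  calc ‖A *ᵥ v‖ ≤ ‖LinearMap.toContinuousLinearMap (mulVecLin A)‖ * ‖v‖ :=
        (LinearMap.toContinuousLinearMap (mulVecLin A)).le_opNorm v
    _ ≤ max c 1 * ‖v‖ := by
        gcongr
        exact (hc (Set.mem_image_of_mem _ hA)).trans (le_max_left _ _)

variable [DecidableEq ι]

lemma abs_apply_le_norm_mulVec_single (A : Matrix ι ι ℝ) (i j : ι) :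
    |A i j| ≤ ‖A *ᵥ Pi.single j 1‖ := by
  simpa [mulVec_single_one, Real.norm_eq_abs] using norm_le_pi_norm (A *ᵥ Pi.single j 1) i

lemma prodOf_subset_closure (S : Set (Matrix ι ι ℝ)) (n : ℕ) :
    prodOf S n ⊆ Submonoid.closure S := by
  rintro _ ⟨l, -, hl, rfl⟩
  exact Submonoid.list_prod_mem _ fun A hA => Submonoid.subset_closure (hl A hA)

lemma jsr_le_one_of_mnorm_le {S : Set (Matrix ι ι ℝ)} {D : ℝ}
    (hD : ∀ P ∈ Submonoid.closure S, mnorm P ≤ D) : jsr S ≤ 1 := by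
  set B := max D 1
  have hB : 0 < B := lt_max_of_lt_right one_pos
  have hle : ∀ n : ℕ, sSup ((fun P => mnorm P ^ (1 / (n : ℝ))) '' prodOf S n) ≤ B ^ (1 / (n : ℝ)) :=
    fun n => Real.sSup_le (by
      rintro _ ⟨P, hP, rfl⟩
      exact Real.rpow_le_rpow (mnorm_nonneg P)
        ((hD P (prodOf_subset_closure S n hP)).trans (le_max_left _ _)) (by positivity))
      (by positivity)
  have hlim : Tendsto (fun n : ℕ => B ^ (1 / (n : ℝ))) atTop (nhds 1) := by
    simpa using tendsto_const_nhds.rpow tendsto_one_div_atTop_nhds_zero_nat (Or.inl hB.ne')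
  calc jsr S ≤ limsup (fun n : ℕ => B ^ (1 / (n : ℝ))) atTop :=
        limsup_le_limsup (Eventually.of_forall hle)
          (isCoboundedUnder_le_of_le atTop fun n => Real.sSup_nonneg (by
            rintro _ ⟨P, -, rfl⟩
            exact Real.rpow_nonneg (mnorm_nonneg P) _))
          hlim.isBoundedUnder_le
    _ = 1 := hlim.limsup_eq

lemma exists_mnorm_le_of_span_eq_top {F : Set (Matrix ι ι ℝ)} {O : Set (ι → ℝ)} {C : ℝ}
    (hO : Submodule.span ℝ O = ⊤) (hC : ∀ P ∈ F, ∀ x ∈ O, ‖P *ᵥ x‖ ≤ C) :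
    ∃ D, ∀ P ∈ F, mnorm P ≤ D := by
  choose K hK using fun j : ι =>
    exists_norm_mulVec_le_of_mem_span hC (hO ▸ Submodule.mem_top : Pi.single j 1 ∈ _)
  have hKD : ∀ j, K j ≤ ∑ k, |K k| := fun j =>
    (le_abs_self _).trans (Finset.single_le_sum (fun k _ => abs_nonneg (K k)) (Finset.mem_univ j))
  have hD : 0 ≤ ∑ k, |K k| := Finset.sum_nonneg fun k _ => abs_nonneg (K k)
  exact ⟨_, fun P hP => Real.iSup_le (fun i => Real.iSup_le (fun j =>
    (abs_apply_le_norm_mulVec_single P i j).trans ((hK j P hP).trans (hKD j))) hD) hD⟩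

def monoidOrbit (S : Set (Matrix ι ι ℝ)) (y : ι → ℝ) : Set (ι → ℝ) :=
  (· *ᵥ y) '' Submonoid.closure S

lemma mulVec_mem_monoidOrbit {S : Set (Matrix ι ι ℝ)} {y x : ι → ℝ} {P : Matrix ι ι ℝ}
    (hP : P ∈ Submonoid.closure S) (hx : x ∈ monoidOrbit S y) : P *ᵥ x ∈ monoidOrbit S y := by
  obtain ⟨Q, hQ, rfl⟩ := hx
  exact ⟨P * Q, mul_mem hP hQ, (mulVec_mulVec y P Q).symm⟩

lemma mulVec_mem_span_monoidOrbit {S : Set (Matrix ι ι ℝ)} {y x : ι → ℝ} {A : Matrix ι ι ℝ}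
    (hA : A ∈ S) (hx : x ∈ Submodule.span ℝ (monoidOrbit S y)) :
    A *ᵥ x ∈ Submodule.span ℝ (monoidOrbit S y) := by
  rw [← mulVecLin_apply, ← Submodule.mem_comap]
  refine Submodule.span_le.2 (fun z hz => ?_) hx
  exact Submodule.subset_span (mulVec_mem_monoidOrbit (Submonoid.subset_closure hA) hz)

lemma exists_list_norm_prod_mulVec_gt {S : Set (Matrix ι ι ℝ)} (hρ : 1 < jsr S) (y : ι → ℝ)
    (hinv : ∀ V : Submodule ℝ (ι → ℝ), V ≠ ⊤ →
      (∀ A ∈ S, ∀ x ∈ V, A *ᵥ x ∈ V) → y ∉ V) (C : ℝ) :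
    ∃ l : List (Matrix ι ι ℝ), (∀ A ∈ l, A ∈ S) ∧ C < ‖l.prod *ᵥ y‖ := by
  suffices ∃ P ∈ Submonoid.closure S, C < ‖P *ᵥ y‖ by
    obtain ⟨P, hP, hC⟩ := this
    obtain ⟨l, hl, rfl⟩ := Submonoid.exists_list_of_mem_closure hP
    exact ⟨l, hl, hC⟩
  by_contra! hbdd
  have hspan : Submodule.span ℝ (monoidOrbit S y) = ⊤ := by
    by_contra hne
    exact hinv _ hne (fun A hA x => mulVec_mem_span_monoidOrbit hA)
      (Submodule.subset_span ⟨1, one_mem _, one_mulVec y⟩)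
  obtain ⟨D, hD⟩ := exists_mnorm_le_of_span_eq_top hspan fun P hP x hx => by
    obtain ⟨Q, hQ, hQx⟩ := mulVec_mem_monoidOrbit hP hx
    exact (congrArg norm hQx).symm.trans_le (hbdd Q hQ)
  exact (jsr_le_one_of_mnorm_le hD).not_gt hρ

lemma norm_list_prod_mulVec_le {S : Set (Matrix ι ι ℝ)} {b : ℝ} (hb : 0 ≤ b)
    (hS : ∀ A ∈ S, ∀ v, ‖A *ᵥ v‖ ≤ b * ‖v‖) (v : ι → ℝ) :
    ∀ l : List (Matrix ι ι ℝ), (∀ A ∈ l, A ∈ S) → ‖l.prod *ᵥ v‖ ≤ b ^ l.length * ‖v‖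
  | [], _ => by simp
  | A :: l, hl => by
    rw [List.prod_cons, ← mulVec_mulVec, List.length_cons, pow_succ', mul_assoc]
    exact (hS A (hl A List.mem_cons_self) _).trans <| mul_le_mul_of_nonneg_left
      (norm_list_prod_mulVec_le hb hS v l fun B hB => hl B (List.mem_cons_of_mem A hB)) hb

lemma exists_norm_list_prod_mulVec_le {S : Set (Matrix ι ι ℝ)} (hS : S.Finite) (N : ℕ)
    (y : ι → ℝ) : ∃ T, ∀ l : List (Matrix ι ι ℝ), (∀ A ∈ l, A ∈ S) → l.length ≤ N →
      ‖l.prod *ᵥ y‖ ≤ T := by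
  obtain ⟨b, hb, hbS⟩ := exists_norm_mulVec_le_of_finite hS
  refine ⟨b ^ N * ‖y‖, fun l hl hlN => ?_⟩
  exact (norm_list_prod_mulVec_le (zero_le_one.trans hb) hbS y l hl).trans <|
    mul_le_mul_of_nonneg_right (pow_le_pow_right₀ hb hlN) (norm_nonneg y)

lemma exists_shortest_list_norm_prod_mulVec_gt {S : Set (Matrix ι ι ℝ)} {y : ι → ℝ}
    (hunbdd : ∀ C : ℝ, ∃ l : List (Matrix ι ι ℝ), (∀ A ∈ l, A ∈ S) ∧ C < ‖l.prod *ᵥ y‖)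
    (T : ℝ) : ∃ l : List (Matrix ι ι ℝ), (∀ A ∈ l, A ∈ S) ∧ T < ‖l.prod *ᵥ y‖ ∧
      ∀ l' : List (Matrix ι ι ℝ), (∀ A ∈ l', A ∈ S) → l'.length < l.length →
        ‖l'.prod *ᵥ y‖ ≤ T := by
  classical
  have hex : ∃ n, ∃ l : List (Matrix ι ι ℝ), l.length = n ∧ (∀ A ∈ l, A ∈ S) ∧
      T < ‖l.prod *ᵥ y‖ := by
    obtain ⟨l, hl, hT⟩ := hunbdd T
    exact ⟨_, l, rfl, hl, hT⟩
  obtain ⟨l, hlen, hl, hT⟩ := Nat.find_spec hex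
  refine ⟨l, hl, hT, fun l' hl' hlt => not_lt.1 fun hT' => ?_⟩
  exact Nat.find_min hex (hlen ▸ hlt) ⟨l', rfl, hl', hT'⟩

theorem stmt3_general (d : ℕ) (S : Set (Matrix (Fin d) (Fin d) ℝ)) (hfin : S.Finite)
    (hρ : 1 < jsr S) (y : Fin d → ℝ)
    (hinv : ∀ V : Submodule ℝ (Fin d → ℝ), V ≠ ⊤ →
      (∀ A ∈ S, ∀ x ∈ V, A.mulVec x ∈ V) → y ∉ V) :
    ∀ L : ℕ, ∃ n, L ≤ n ∧ ∃ l : List (Matrix (Fin d) (Fin d) ℝ),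
      l.length = n ∧ (∀ A ∈ l, A ∈ S) ∧
      ‖y‖ < ‖l.prod.mulVec y‖ ∧
      ∀ i : ℕ, i ≤ n - 2 →
        ‖(l.drop (n - (i+1))).prod.mulVec y‖ < ‖l.prod.mulVec y‖ := by
  intro L
  obtain ⟨T, hT⟩ := exists_norm_list_prod_mulVec_le hfin (L + 1) y
  obtain ⟨l, hl, hlT, hshortest⟩ := exists_shortest_list_norm_prod_mulVec_gt
    (exists_list_norm_prod_mulVec_gt hρ y hinv) T
  have hlen : L + 1 < l.length := not_le.1 fun h => (hT l hl h).not_gt hlT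
  have hyT : ‖y‖ ≤ T := by simpa using hT [] (by simp) (by simp)
  refine ⟨l.length, by omega, l, rfl, hl, hyT.trans_lt hlT, fun i hi => ?_⟩
  refine (hshortest _ (fun A hA => hl A (List.mem_of_mem_drop hA)) ?_).trans_lt hlT
  rw [List.length_drop]
  omega

theorem stmt3 (d : ℕ) (S : Set (Matrix (Fin d) (Fin d) ℝ)) (hfin : S.Finite)
    (hρ : 1 < jsr S) (y : Fin d → ℝ) (hy : y ≠ 0)
    (hinv : ∀ V : Submodule ℝ (Fin d → ℝ), V ≠ ⊤ →
      (∀ A ∈ S, ∀ x ∈ V, A.mulVec x ∈ V) → y ∉ V) :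
    ∀ L : ℕ, ∃ n, L ≤ n ∧ ∃ l : List (Matrix (Fin d) (Fin d) ℝ),
      l.length = n ∧ (∀ A ∈ l, A ∈ S) ∧
      ‖y‖ < ‖l.prod.mulVec y‖ ∧
      ∀ i : ℕ, i ≤ n - 2 →
        ‖(l.drop (n - (i+1))).prod.mulVec y‖ < ‖l.prod.mulVec y‖ :=
  stmt3_general d S hfin hρ y hinv
end

section
/- Let $\mathcal{M}$ be a compact set of $d \times d$ real matrices and $y \in \mathbb{R}^d$. If $\rho(\mathcal{M}) > 1$ and $y$ does not belong to any proper common invariant subspace of the matrices in $\mathcal{M}$, then $\sup_{n \geq 1} \max_{M_1,\dots,M_n \in \mathcal{M}} \|M_1 \cdots M_n y\| = \infty$. -/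
/-!
Suppose the products applied to `y` stay bounded. The vectors `x` whose images under all
products of positive length stay bounded form a subspace; it contains the orbit of `y`, whose
span is invariant and contains `y`, hence is everything. By Banach–Steinhaus the products are
then uniformly bounded, which forces `jsr S ≤ 1`.
-/

open Filter Matrix

lemma exists_opNorm_le_of_span_eq_top {𝕜 E F ι : Type*} [NontriviallyNormedField 𝕜]
    [SeminormedAddCommGroup E] [NormedSpace 𝕜 E] [CompleteSpace E]
    [SeminormedAddCommGroup F] [NormedSpace 𝕜 F] {G : Set E}
    (hG : Submodule.span 𝕜 G = ⊤) {g : ι → E →L[𝕜] F}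
    (h : ∀ v ∈ G, ∃ C, ∀ i, ‖g i v‖ ≤ C) : ∃ C', ∀ i, ‖g i‖ ≤ C' := by
  refine banach_steinhaus fun x => ?_
  have hx : x ∈ Submodule.span 𝕜 G := hG ▸ Submodule.mem_top
  induction hx using Submodule.span_induction with
  | mem v hv => exact h v hv
  | zero => exact ⟨0, fun i => by simp⟩
  | add x y _ _ hx hy =>
    obtain ⟨Cx, hCx⟩ := hx
    obtain ⟨Cy, hCy⟩ := hy
    exact ⟨Cx + Cy, fun i => by
      rw [map_add]; exact (norm_add_le _ _).trans (add_le_add (hCx i) (hCy i))⟩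
  | smul c x _ hx =>
    obtain ⟨C, hC⟩ := hx
    exact ⟨‖c‖ * C, fun i => by
      rw [map_smul, norm_smul]; exact mul_le_mul_of_nonneg_left (hC i) (norm_nonneg _)⟩

section

variable {ι : Type*} [Fintype ι]

lemma mnorm_le_opNorm (A : Matrix ι ι ℝ) :
    mnorm A ≤ ‖(ContinuousLinearMap.mk A.mulVecLin : (ι → ℝ) →L[ℝ] (ι → ℝ))‖ := by
  refine Real.iSup_le (fun i => Real.iSup_le (fun j => ?_) (norm_nonneg _)) (norm_nonneg _)
  classical
  calc |A i j| = ‖(A *ᵥ Pi.single j 1) i‖ := by simp [mulVec_single]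
    _ ≤ ‖A *ᵥ Pi.single j 1‖ := norm_le_pi_norm _ i
    _ ≤ _ * ‖(Pi.single j 1 : ι → ℝ)‖ := (ContinuousLinearMap.mk A.mulVecLin).le_opNorm _
    _ = _ := by rw [Pi.norm_single, norm_one, mul_one]

variable [DecidableEq ι] {S : Set (Matrix ι ι ℝ)}

lemma one_mem_prodOf_zero : (1 : Matrix ι ι ℝ) ∈ prodOf S 0 :=
  ⟨[], rfl, by simp, rfl⟩

lemma mem_prodOf_one {A : Matrix ι ι ℝ} (hA : A ∈ S) : A ∈ prodOf S 1 :=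
  ⟨[A], rfl, by simpa using hA, by simp⟩

lemma mul_mem_prodOf {m n : ℕ} {P Q : Matrix ι ι ℝ} (hP : P ∈ prodOf S m)
    (hQ : Q ∈ prodOf S n) : P * Q ∈ prodOf S (m + n) := by
  obtain ⟨l, rfl, hlS, rfl⟩ := hP
  obtain ⟨l', rfl, hlS', rfl⟩ := hQ
  refine ⟨l ++ l', List.length_append, fun A hA => ?_, List.prod_append⟩
  rcases List.mem_append.1 hA with h | h
  exacts [hlS A h, hlS' A h]

lemma jsr_le_one_of_forall_mnorm_le {K : ℝ}
    (hK : ∀ n, 1 ≤ n → ∀ P ∈ prodOf S n, mnorm P ≤ K) : jsr S ≤ 1 := by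
  set K' := max K 1
  have hK'_pos : 0 < K' := lt_max_of_lt_right one_pos
  have hroot : Tendsto (fun n : ℕ => K' ^ (1 / (n : ℝ))) atTop (nhds 1) := by
    simpa [Function.comp_def] using ((Real.continuousAt_const_rpow hK'_pos.ne').tendsto.comp
      tendsto_one_div_atTop_nhds_zero_nat)
  have hbound : ∀ᶠ n : ℕ in atTop,
      sSup ((fun P => mnorm P ^ (1 / (n : ℝ))) '' prodOf S n) ≤ K' ^ (1 / (n : ℝ)) := by
    filter_upwards [eventually_ge_atTop 1] with n hn
    refine Real.sSup_le ?_ (Real.rpow_nonneg hK'_pos.le _)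
    rintro _ ⟨P, hP, rfl⟩
    exact Real.rpow_le_rpow (mnorm_nonneg P) ((hK n hn P hP).trans (le_max_left _ _))
      (by positivity)
  have hcobdd : IsCoboundedUnder (· ≤ ·) atTop
      (fun n : ℕ => sSup ((fun P => mnorm P ^ (1 / (n : ℝ))) '' prodOf S n)) :=
    isCoboundedUnder_le_of_le atTop (x := 0) fun n => Real.sSup_nonneg <| by
      rintro _ ⟨P, -, rfl⟩; exact Real.rpow_nonneg (mnorm_nonneg P) _
  calc jsr S ≤ limsup (fun n : ℕ => K' ^ (1 / (n : ℝ))) atTop :=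
        limsup_le_limsup hbound hcobdd hroot.isBoundedUnder_le
    _ = 1 := hroot.limsup_eq

def orbitOf (S : Set (Matrix ι ι ℝ)) (y : ι → ℝ) : Set (ι → ℝ) :=
  {v | ∃ n, ∃ P ∈ prodOf S n, P *ᵥ y = v}

lemma mulVec_mem_span_orbitOf {y x : ι → ℝ} {A : Matrix ι ι ℝ} (hA : A ∈ S)
    (hx : x ∈ Submodule.span ℝ (orbitOf S y)) : A *ᵥ x ∈ Submodule.span ℝ (orbitOf S y) := by
  have hmap : (Submodule.span ℝ (orbitOf S y)).map A.mulVecLin ≤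
      Submodule.span ℝ (orbitOf S y) := by
    rw [Submodule.map_span, Submodule.span_le]
    rintro _ ⟨_, ⟨n, P, hP, rfl⟩, rfl⟩
    exact Submodule.subset_span
      ⟨1 + n, A * P, mul_mem_prodOf (mem_prodOf_one hA) hP, (mulVec_mulVec _ _ _).symm⟩
  exact hmap ⟨x, hx, rfl⟩

lemma span_orbitOf_eq_top {y : ι → ℝ}
    (hinv : ∀ V : Submodule ℝ (ι → ℝ), V ≠ ⊤ → (∀ A ∈ S, ∀ x ∈ V, A *ᵥ x ∈ V) → y ∉ V) :
    Submodule.span ℝ (orbitOf S y) = ⊤ := by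
  by_contra hne
  refine hinv _ hne (fun A hA x hx => mulVec_mem_span_orbitOf hA hx) (Submodule.subset_span ?_)
  exact ⟨0, 1, one_mem_prodOf_zero, one_mulVec y⟩

lemma norm_mulVec_le_of_mem_orbitOf {y v : ι → ℝ} {C : ℝ}
    (hC : ∀ n, 1 ≤ n → ∀ P ∈ prodOf S n, ‖P *ᵥ y‖ ≤ C) (hv : v ∈ orbitOf S y)
    {m : ℕ} (hm : 1 ≤ m) {Q : Matrix ι ι ℝ} (hQ : Q ∈ prodOf S m) : ‖Q *ᵥ v‖ ≤ C := by
  obtain ⟨n, P, hP, rfl⟩ := hv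
  rw [mulVec_mulVec]
  exact hC (m + n) (hm.trans (Nat.le_add_right m n)) _ (mul_mem_prodOf hQ hP)

end

theorem stmt4_general (d : ℕ) (S : Set (Matrix (Fin d) (Fin d) ℝ))
    (hρ : 1 < jsr S) (y : Fin d → ℝ)
    (hinv : ∀ V : Submodule ℝ (Fin d → ℝ), V ≠ ⊤ →
      (∀ A ∈ S, ∀ x ∈ V, A.mulVec x ∈ V) → y ∉ V) :
    ∀ C : ℝ, ∃ n : ℕ, 1 ≤ n ∧ ∃ P ∈ prodOf S n, C < ‖P.mulVec y‖ := by
  by_contra! ⟨C, hC⟩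
  let toCLM (Q : {Q // ∃ m, 1 ≤ m ∧ Q ∈ prodOf S m}) : (Fin d → ℝ) →L[ℝ] (Fin d → ℝ) :=
    ContinuousLinearMap.mk Q.1.mulVecLin
  obtain ⟨K, hK⟩ := exists_opNorm_le_of_span_eq_top (span_orbitOf_eq_top hinv) (g := toCLM)
    fun v hv => ⟨C, fun ⟨_, _, hm, hQ⟩ => norm_mulVec_le_of_mem_orbitOf hC hv hm hQ⟩
  have := jsr_le_one_of_forall_mnorm_le fun n hn P hP =>
    (mnorm_le_opNorm P).trans (hK ⟨P, n, hn, hP⟩)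
  linarith

theorem stmt4 (d : ℕ) (S : Set (Matrix (Fin d) (Fin d) ℝ)) (hcpt : IsCompact S)
    (hρ : 1 < jsr S) (y : Fin d → ℝ)
    (hinv : ∀ V : Submodule ℝ (Fin d → ℝ), V ≠ ⊤ →
      (∀ A ∈ S, ∀ x ∈ V, A.mulVec x ∈ V) → y ∉ V) :
    ∀ C : ℝ, ∃ n : ℕ, 1 ≤ n ∧ ∃ P ∈ prodOf S n, C < ‖P.mulVec y‖ :=
  stmt4_general d S hρ y hinv
end

section
/- Let $a(z)$ be a Laurent polynomial with real coefficients such that $a(z) \neq 0$ on a neighborhood of $z = 0$ in $\mathbb{C}$ (equivalently, $a(0) \neq 0$ after writing $a$ as a power series). Let $b(z) = \sum_{\beta \geq 0} b(\beta) z^\beta$ be the Taylor expansion of $1/a(z)$ near $0$. Then for any compactly supported continuous function $h : \mathbb{R} \to \mathbb{R}$, setting $g := \sum_{\alpha} a(\alpha) h(\cdot - \alpha)$ (a finite sum), one has $h = \sum_{\beta \geq 0} b(\beta) g(\cdot - \beta)$, with the series converging locally uniformly (locally a finite sum on compact sets). -/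
/-!
For fixed `x` put `F n = h (x - n)`; compact support makes `F` vanish from some `K` on, so every
series involved is a finite sum over `range K`. Regrouping the double sum
`∑ β, b β * ∑ α, a α * F (α + β)` along `γ = α + β` produces the coefficients of the Cauchy
product `a * b = 1`, which leaves `F 0 = h x`.
-/

open Filter Finset

theorem sum_range_mul_sum_range_add_eq {R : Type*} [CommSemiring R] (a b F : ℕ → R) {K : ℕ}
    (hF : ∀ n, K ≤ n → F n = 0) :
    ∑ β ∈ range K, b β * ∑ α ∈ range K, a α * F (α + β) =
      ∑ γ ∈ range K, (∑ α ∈ range (γ + 1), a α * b (γ - α)) * F γ := by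
  calc ∑ β ∈ range K, b β * ∑ α ∈ range K, a α * F (α + β)
      = ∑ α ∈ range K, ∑ β ∈ range (K - α), a α * b β * F (α + β) := by
        simp_rw [mul_sum]
        rw [sum_comm]
        refine sum_congr rfl fun α _ => ?_
        refine (sum_subset (range_subset_range.2 (Nat.sub_le K α)) fun β _ hβ => ?_).symm.trans
          (sum_congr rfl fun β _ => by ring)
        rw [hF _ (by simp at hβ; omega), mul_zero, mul_zero]
    _ = ∑ γ ∈ range K, ∑ α ∈ range (γ + 1), a α * b (γ - α) * F (α + (γ - α)) :=
        (sum_range_diag_flip K fun α β => a α * b β * F (α + β)).symm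
    _ = ∑ γ ∈ range K, (∑ α ∈ range (γ + 1), a α * b (γ - α)) * F γ := by
        refine sum_congr rfl fun γ _ => ?_
        rw [sum_mul]
        refine sum_congr rfl fun α hα => ?_
        rw [Nat.add_sub_cancel' (Nat.lt_succ_iff.1 (mem_range.1 hα))]

theorem HasCompactSupport.eventually_apply_sub_eq_zero {M : Type*} [Zero M] {h : ℝ → M}
    (hsupp : HasCompactSupport h) (x : ℝ) : ∀ᶠ t in atTop, h (x - t) = 0 := by
  have hcocompact : h =ᶠ[cocompact ℝ] 0 := by
    rw [← coclosedCompact_eq_cocompact]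
    exact hasCompactSupport_iff_eventuallyEq.1 hsupp
  exact (tendsto_atTop_atBot.2 fun y => ⟨x - y, fun t ht => by linarith⟩).eventually
    (hcocompact.filter_mono atBot_le_cocompact)

theorem stmt6_general (N : ℕ) (a : ℕ → ℝ) (hasupp : ∀ α, N < α → a α = 0)
    (b : ℕ → ℝ)
    (hab : ∀ β : ℕ, ∑ α ∈ Finset.range (β+1), a α * b (β - α)
      = if β = 0 then 1 else 0)
    (h : ℝ → ℝ) (hsupp : HasCompactSupport h)
    (g : ℝ → ℝ) (hg : ∀ x, g x = ∑ α ∈ Finset.range (N+1), a α * h (x - α)) :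
    ∀ x, HasSum (fun β : ℕ => b β * g (x - β)) (h x) := by
  intro x
  set F : ℕ → ℝ := fun n => h (x - n)
  obtain ⟨K, hK⟩ := eventually_atTop.1 <|
    (tendsto_natCast_atTop_atTop.eventually (hsupp.eventually_apply_sub_eq_zero x)).and
      (eventually_gt_atTop N)
  have hF : ∀ n, K ≤ n → F n = 0 := fun n hn => (hK n hn).1
  have hNK : N + 1 ≤ K := (hK K le_rfl).2
  have hgF : ∀ β : ℕ, g (x - β) = ∑ α ∈ range K, a α * F (α + β) := by
    intro β
    rw [hg, sum_subset (range_subset_range.2 hNK) fun α _ hα => by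
      rw [hasupp α (by simp at hα; omega), zero_mul]]
    refine sum_congr rfl fun α _ => ?_
    rw [sub_sub, add_comm (β : ℝ), ← Nat.cast_add]
  have hvanish : ∀ β ∉ range K, b β * g (x - β) = 0 := by
    intro β hβ
    rw [hgF, sum_eq_zero fun α _ => by rw [hF _ (by simp at hβ; omega), mul_zero], mul_zero]
  suffices ∑ β ∈ range K, b β * g (x - β) = h x from this ▸ hasSum_sum_of_ne_finset_zero hvanish
  simp_rw [hgF, sum_range_mul_sum_range_add_eq a b F hF, hab, ite_mul, one_mul, zero_mul,
    sum_ite_eq', mem_range]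
  simp [F, show 0 < K by omega]

theorem stmt6 (N : ℕ) (a : ℕ → ℝ) (ha0 : a 0 ≠ 0) (hasupp : ∀ α, N < α → a α = 0)
    (b : ℕ → ℝ)
    (hab : ∀ β : ℕ, ∑ α ∈ Finset.range (β+1), a α * b (β - α)
      = if β = 0 then 1 else 0)
    (h : ℝ → ℝ) (hc : Continuous h) (hsupp : HasCompactSupport h)
    (g : ℝ → ℝ) (hg : ∀ x, g x = ∑ α ∈ Finset.range (N+1), a α * h (x - α)) :
    ∀ x, HasSum (fun β : ℕ => b β * g (x - β)) (h x) :=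
  stmt6_general N a hasupp b hab h hsupp g hg
end

section
/- Let $(p_k)_{k \geq 1}$ be a sequence of 1-periodic trigonometric polynomials of uniformly bounded degree $N$ with $p_k(0) = 1$, and suppose the sequence is uniformly bounded on $\mathbb{R}$ (e.g. because $p_k \to p$ uniformly for some trigonometric polynomial $p$). Then the infinite product $f(x) := \prod_{k=1}^\infty p_k(2^{-k}x)$ converges uniformly on every compact subset of $\mathbb{R}$. -/
/-!
Integrating a trigonometric polynomial against `e^{2πijx}` over a period recovers its
`j`-th coefficient, so a uniform bound `B` on the `p_k` bounds all their coefficients by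
`B`. Together with `|e^{iθ} - 1| ≤ |θ|` and `p_k(0) = 1` this gives `|p_k(t) - 1| ≤ L|t|`
with `L` independent of `k`. On a compact set `|x| ≤ C` the factors therefore satisfy
`|p_k(2^{-k}x) - 1| ≤ L C 2^{-k}`, a summable bound, and a product `∏ (1 + f_k)` of
continuous perturbations with summable sup norms converges uniformly.
-/

open Complex Real Finset Filter

noncomputable def trigPoly (N : ℕ) (a : ℕ → ℂ) (x : ℝ) : ℂ :=
  ∑ j ∈ range (N + 1), a j * cexp (-2 * π * I * j * x)

lemma continuous_trigPoly (N : ℕ) (a : ℕ → ℂ) : Continuous (trigPoly N a) := by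
  unfold trigPoly; fun_prop

lemma integral_exp_two_pi_I_int_mul (d : ℤ) :
    ∫ x in (0 : ℝ)..1, cexp (2 * π * I * d * x) = if d = 0 then 1 else 0 := by
  split_ifs with hd
  · simp [hd]
  · have hc : 2 * π * I * d ≠ 0 := by simp [pi_ne_zero, I_ne_zero, hd]
    have hexp : cexp (2 * π * I * d) = 1 := by rw [mul_comm, exp_int_mul_two_pi_mul_I]
    simp [integral_exp_mul_complex hc, hexp]

lemma integral_trigPoly_mul_exp (N : ℕ) (a : ℕ → ℂ) {j : ℕ} (hj : j ≤ N) :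
    ∫ x in (0 : ℝ)..1, trigPoly N a x * cexp (2 * π * I * j * x) = a j := by
  have hterm (i : ℕ) :
      ∫ x in (0 : ℝ)..1, a i * cexp (-2 * π * I * i * x) * cexp (2 * π * I * j * x) =
        if i = j then a i else 0 := by
    have (x : ℝ) : a i * cexp (-2 * π * I * i * x) * cexp (2 * π * I * j * x) =
        a i * cexp (2 * π * I * ((j - i : ℤ) : ℂ) * x) := by
      rw [mul_assoc, ← Complex.exp_add]; push_cast; ring_nf
    simp_rw [this, intervalIntegral.integral_const_mul, integral_exp_two_pi_I_int_mul,
      sub_eq_zero]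
    split_ifs <;> simp_all [eq_comm]
  simp_rw [trigPoly, Finset.sum_mul]
  rw [intervalIntegral.integral_finsetSum fun i _ =>
    (by fun_prop : Continuous _).intervalIntegrable 0 1]
  simp only [hterm, sum_ite_eq', mem_range, if_pos (Nat.lt_succ_of_le hj)]

lemma norm_coeff_le_of_norm_trigPoly_le {N : ℕ} {a : ℕ → ℂ} {B : ℝ}
    (hB : ∀ x, ‖trigPoly N a x‖ ≤ B) {j : ℕ} (hj : j ≤ N) : ‖a j‖ ≤ B := by
  have hunit (x : ℝ) : ‖cexp (2 * π * I * j * x)‖ = 1 := by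
    rw [show (2 * π * I * j * x : ℂ) = ((2 * π * j * x : ℝ) : ℂ) * I by push_cast; ring,
      norm_exp_ofReal_mul_I]
  calc ‖a j‖ = ‖∫ x in (0 : ℝ)..1, trigPoly N a x * cexp (2 * π * I * j * x)‖ := by
        rw [integral_trigPoly_mul_exp N a hj]
    _ ≤ B * |1 - 0| :=
        intervalIntegral.norm_integral_le_of_norm_le_const fun x _ => by
          rw [norm_mul, hunit, mul_one]; exact hB x
    _ = B := by simp

lemma norm_trigPoly_sub_trigPoly_zero_le (N : ℕ) (a : ℕ → ℂ) (t : ℝ) :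
    ‖trigPoly N a t - trigPoly N a 0‖ ≤
      (∑ j ∈ range (N + 1), ‖a j‖ * (2 * π * j)) * |t| := by
  have hterm (j : ℕ) : ‖cexp (-2 * π * I * j * t) - 1‖ ≤ 2 * π * j * |t| := by
    rw [show (-2 * π * I * j * t : ℂ) = I * ((-2 * π * j * t : ℝ) : ℂ) by push_cast; ring]
    refine norm_exp_I_mul_ofReal_sub_one_le.trans_eq ?_
    simp [abs_of_pos pi_pos, mul_assoc]
  simp only [trigPoly, ofReal_zero, mul_zero, Complex.exp_zero, mul_one, ← sum_sub_distrib,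
    sum_mul]
  refine (norm_sum_le _ _).trans (sum_le_sum fun j _ => ?_)
  rw [← mul_sub_one, norm_mul, mul_assoc ‖a j‖]
  exact mul_le_mul_of_nonneg_left (hterm j) (norm_nonneg (a j))

lemma norm_trigPoly_sub_trigPoly_zero_le_of_norm_le {N : ℕ} {a : ℕ → ℂ} {B : ℝ}
    (hB : ∀ x, ‖trigPoly N a x‖ ≤ B) (t : ℝ) :
    ‖trigPoly N a t - trigPoly N a 0‖ ≤ 2 * π * N * (N + 1) * B * |t| := by
  refine (norm_trigPoly_sub_trigPoly_zero_le N a t).trans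
    (mul_le_mul_of_nonneg_right ?_ (abs_nonneg t))
  calc ∑ j ∈ range (N + 1), ‖a j‖ * (2 * π * j)
      ≤ ∑ j ∈ range (N + 1), B * (2 * π * N) := sum_le_sum fun j hj => by
        have hjN : j ≤ N := Nat.lt_succ_iff.mp (mem_range.mp hj)
        gcongr
        · exact (norm_nonneg _).trans (hB 0)
        · exact norm_coeff_le_of_norm_trigPoly_le hB hjN
    _ = 2 * π * N * (N + 1) * B := by simp; ring

lemma tendstoUniformlyOn_prod_range_dyadic {R : Type*} [NormedCommRing R] [NormOneClass R]
    [CompleteSpace R] {q : ℕ → ℝ → R} (hq : ∀ k, Continuous (q k)) {L : ℝ}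
    (hL : ∀ k t, ‖q k t - 1‖ ≤ L * |t|) {K : Set ℝ} (hK : IsCompact K) :
    TendstoUniformlyOn (fun n x => ∏ k ∈ range n, q (k + 1) (x / 2 ^ (k + 1)))
      (fun x => ∏' k, q (k + 1) (x / 2 ^ (k + 1))) atTop K := by
  obtain ⟨C, hC⟩ := hK.isBounded.exists_norm_le
  have hL0 : 0 ≤ L := by simpa using (norm_nonneg _).trans (hL 0 1)
  have hsum : Summable fun k : ℕ => L * C / 2 ^ (k + 1) :=
    (summable_geometric_two' (L * C)).congr fun k => by ring
  have hbound :
      ∀ᶠ k in atTop, ∀ x ∈ K,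
        ‖q (k + 1) (x / 2 ^ (k + 1)) - 1‖ ≤ L * C / 2 ^ (k + 1) :=
    Eventually.of_forall fun k x hx => calc
      ‖q (k + 1) (x / 2 ^ (k + 1)) - 1‖ ≤ L * |x / 2 ^ (k + 1)| := hL _ _
      _ = L * |x| / 2 ^ (k + 1) := by rw [abs_div, abs_pow, abs_two, mul_div_assoc]
      _ ≤ L * C / 2 ^ (k + 1) := by gcongr; exact hC x hx
  have := hsum.hasProdUniformlyOn_nat_one_add hK hbound fun k => by fun_prop
  simpa using this.tendstoUniformlyOn_finsetRange

theorem stmt13 (N : ℕ) (c : ℕ → ℕ → ℂ) (p : ℕ → ℝ → ℂ)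
    (hp : ∀ k x, p k x = ∑ j ∈ Finset.range (N+1),
      c k j * Complex.exp (-2 * (Real.pi:ℂ) * Complex.I * (j:ℂ) * (x:ℂ)))
    (h0 : ∀ k, p k 0 = 1) (B : ℝ) (hB : ∀ k x, ‖p k x‖ ≤ B) :
    ∃ f : ℝ → ℂ, ∀ K : Set ℝ, IsCompact K →
      TendstoUniformlyOn (fun n x => ∏ k ∈ Finset.range n, p (k+1) (x / 2^(k+1)))
        f Filter.atTop K := by
  have hpa : ∀ k, p k = trigPoly N (c k) := fun k => funext (hp k)
  have hcont : ∀ k, Continuous (p k) := fun k => hpa k ▸ continuous_trigPoly N (c k)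
  have hlip : ∀ k t, ‖p k t - 1‖ ≤ 2 * π * N * (N + 1) * B * |t| := fun k t => by
    have hBk : ∀ x, ‖trigPoly N (c k) x‖ ≤ B := hpa k ▸ hB k
    simpa only [← hpa, h0] using norm_trigPoly_sub_trigPoly_zero_le_of_norm_le hBk t
  exact ⟨_, fun K hK => tendstoUniformlyOn_prod_range_dyadic hcont hlip hK⟩
end
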